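/- arXiv:2205.05613 — 5 statements merged into one kernel-verified Lean document; each statement's English description precedes it below -/
import Mathlib

section
/- Let F = {f_i}_{i=1}^k be a frame for F^n and H = {h_i}_{i=1}^k any dual frame for F. Then P_F(H) = Σ_{i,j} |⟨f_i, h_j⟩|^2 ≥ n, with equality if and only if H is the canonical dual frame of F. -/
open scoped InnerProductSpace ComplexInnerProductSpace
open Finset

noncomputable section

abbrev Esp (n : ℕ) := EuclideanSpace ℂ (Fin n)

/-- A frame for a finite-dimensional Hilbert space: a finite spanning family. -/
def IsFrame {n k : ℕ} (f : Fin k → Esp n) : Prop :=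
  Submodule.span ℂ (Set.range f) = ⊤

/-- `h` is a dual frame of `f`: `∑ i ⟨x, h i⟩ f i = x` for all `x`
(paper convention `⟨·,·⟩` linear in the first slot, i.e. `⟪h i, x⟫` in Mathlib). -/
def IsDualFrame {n k : ℕ} (f h : Fin k → Esp n) : Prop :=
  IsFrame h ∧ ∀ x : Esp n, ∑ i, (⟪h i, x⟫_ℂ) • f i = x

/-- `g` is the canonical dual of the frame `f`, i.e. `g i = S⁻¹ (f i)` where
`S x = ∑ j ⟨x, f j⟩ f j` is the frame operator; equivalently `S (g i) = f i`. -/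
def IsCanonicalDual {n k : ℕ} (f g : Fin k → Esp n) : Prop :=
  ∀ i, ∑ j, (⟪f j, g i⟫_ℂ) • f j = f i

/-- Cross frame potential `P_F(G) = ∑_{i,j} |⟨f i, g j⟩|²`. -/
def crossPot {n k : ℕ} (f g : Fin k → Esp n) : ℝ :=
  ∑ i, ∑ j, ‖(⟪f i, g j⟫_ℂ)‖ ^ 2

namespace CrossPotAux

variable {n k : ℕ}

def frameOp (f : Fin k → Esp n) : Esp n →ₗ[ℂ] Esp n where
  toFun x := ∑ i, (⟪f i, x⟫_ℂ) • f i
  map_add' x y := by simp [inner_add_right, add_smul, Finset.sum_add_distrib]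
  map_smul' c x := by simp [inner_smul_right, smul_smul, Finset.smul_sum]

lemma frameOp_apply (f : Fin k → Esp n) (x : Esp n) :
    frameOp f x = ∑ i, (⟪f i, x⟫_ℂ) • f i := rfl

lemma inner_frameOp (f : Fin k → Esp n) (a b : Esp n) :
    ⟪a, frameOp f b⟫_ℂ = ∑ i, ⟪a, f i⟫_ℂ * ⟪f i, b⟫_ℂ := by
  rw [frameOp_apply, inner_sum]
  exact Finset.sum_congr rfl fun i _ => by rw [inner_smul_right]; ring

lemma frameOp_selfAdj (f : Fin k → Esp n) (a b : Esp n) :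
    ⟪frameOp f a, b⟫_ℂ = ⟪a, frameOp f b⟫_ℂ := by
  rw [← inner_conj_symm, inner_frameOp, map_sum, inner_frameOp]
  refine Finset.sum_congr rfl fun i _ => ?_
  rw [map_mul, inner_conj_symm, inner_conj_symm]
  ring

/-- trace identity -/
lemma sum_inner_diag (v w : Fin k → Esp n) :
    ∑ j, ⟪v j, w j⟫_ℂ =
      ∑ a : Fin n, (∑ j, (⟪v j, (EuclideanSpace.single a (1:ℂ) : Esp n)⟫_ℂ) • w j) a := by
  have key : ∀ a : Fin n, (∑ j, (⟪v j, (EuclideanSpace.single a (1:ℂ) : Esp n)⟫_ℂ) • w j) a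
      = ∑ j, (starRingEnd ℂ) (v j a) * w j a := by
    intro a
    rw [WithLp.ofLp_sum, Finset.sum_apply]
    refine Finset.sum_congr rfl fun j _ => ?_
    rw [EuclideanSpace.inner_single_right, one_mul, PiLp.smul_apply, smul_eq_mul]
  simp only [key]
  rw [Finset.sum_comm]
  refine Finset.sum_congr rfl fun j _ => ?_
  rw [PiLp.inner_apply]
  simp [RCLike.inner_apply]
  exact Finset.sum_congr rfl fun _ _ => mul_comm _ _

/-- a frame has trivial orthogonal complement -/
lemma eq_zero_of_inner_frame {f : Fin k → Esp n} (hf : IsFrame f) (x : Esp n)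
    (hx : ∀ i, ⟪f i, x⟫_ℂ = 0) : x = 0 := by
  have hmem : x ∈ (Submodule.span ℂ (Set.range f))ᗮ := by
    rw [Submodule.mem_orthogonal]
    intro u hu
    induction hu using Submodule.span_induction with
    | mem v hv => obtain ⟨i, rfl⟩ := hv; exact hx i
    | zero => simp
    | add a b _ _ ha hb => rw [inner_add_left, ha, hb, add_zero]
    | smul c a _ ha => rw [inner_smul_left, ha, mul_zero]
  rw [hf, Submodule.top_orthogonal_eq_bot, Submodule.mem_bot] at hmem
  exact hmem

lemma frameOp_injective {f : Fin k → Esp n} (hf : IsFrame f) :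
    Function.Injective (frameOp f) := by
  rw [← LinearMap.ker_eq_bot, Submodule.eq_bot_iff]
  intro x hx
  rw [LinearMap.mem_ker] at hx
  refine eq_zero_of_inner_frame hf x fun i => ?_
  have h0 : ⟪x, frameOp f x⟫_ℂ = 0 := by rw [hx, inner_zero_right]
  rw [inner_frameOp] at h0
  have hterm : ∀ i, ⟪x, f i⟫_ℂ * ⟪f i, x⟫_ℂ = ((‖⟪f i, x⟫_ℂ‖ ^ 2 : ℝ) : ℂ) := by
    intro i
    rw [← inner_conj_symm x (f i), RCLike.conj_mul]
    norm_cast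
  rw [Finset.sum_congr rfl fun i _ => hterm i] at h0
  norm_cast at h0
  have := (Finset.sum_eq_zero_iff_of_nonneg (fun i _ => sq_nonneg ‖⟪f i, x⟫_ℂ‖)).mp h0
    i (Finset.mem_univ i)
  rwa [pow_eq_zero_iff (by norm_num), norm_eq_zero] at this

lemma frameOp_surjective {f : Fin k → Esp n} (hf : IsFrame f) :
    Function.Surjective (frameOp f) :=
  (LinearMap.injective_iff_surjective).mp (frameOp_injective hf)

end CrossPotAux

/-- `P_F(H) ≥ n` for any dual frame `H`, with equality iff `H` is the
canonical dual frame of `F`. -/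
theorem crossPot_dual_ge_dim {n k : ℕ} (f h : Fin k → Esp n)
    (hf : IsFrame f) (hh : IsDualFrame f h) :
    (n : ℝ) ≤ crossPot f h ∧ (crossPot f h = n ↔ IsCanonicalDual f h) := by
  classical
  open CrossPotAux in
  -- the canonical dual `g`
  have hsurj := frameOp_surjective hf
  have hinj := frameOp_injective hf
  set S := frameOp f with hS
  choose g hg using fun j => hsurj (f j)
  -- g is a dual frame
  have gdual : ∀ x : Esp n, ∑ j, (⟪g j, x⟫_ℂ) • f j = x := by
    intro x
    obtain ⟨w, rfl⟩ := hsurj x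
    calc ∑ j, (⟪g j, S w⟫_ℂ) • f j = ∑ j, (⟪f j, w⟫_ℂ) • f j := by
          refine Finset.sum_congr rfl fun j _ => ?_
          rw [← frameOp_selfAdj, hg]
      _ = S w := (frameOp_apply f w).symm
  set u : Fin k → Esp n := fun j => h j - g j with hu
  have hgu : ∀ j, h j = g j + u j := fun j => by simp [hu]
  have udual : ∀ x : Esp n, ∑ j, (⟪u j, x⟫_ℂ) • f j = 0 := by
    intro x
    have : ∑ j, (⟪u j, x⟫_ℂ) • f j
        = (∑ j, (⟪h j, x⟫_ℂ) • f j) - ∑ j, (⟪g j, x⟫_ℂ) • f j := by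
      rw [← Finset.sum_sub_distrib]
      exact Finset.sum_congr rfl fun j _ => by rw [hu, inner_sub_left, sub_smul]
    rw [this, hh.2 x, gdual x, sub_self]
  -- trace identities
  have tr_g : ∑ j, ⟪g j, f j⟫_ℂ = (n : ℂ) := by
    rw [sum_inner_diag]
    have : ∀ a : Fin n,
        (∑ j, (⟪g j, (EuclideanSpace.single a (1:ℂ) : Esp n)⟫_ℂ) • f j) a = 1 := by
      intro a
      rw [gdual]
      simp [EuclideanSpace.single_apply]
    rw [Finset.sum_congr rfl fun a _ => this a]
    simp
  have tr_u : ∑ j, ⟪u j, f j⟫_ℂ = 0 := by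
    rw [sum_inner_diag]
    have : ∀ a : Fin n,
        (∑ j, (⟪u j, (EuclideanSpace.single a (1:ℂ) : Esp n)⟫_ℂ) • f j) a = 0 := by
      intro a
      rw [udual]
      rfl
    rw [Finset.sum_congr rfl fun a _ => this a]
    simp
  have tr_u' : ∑ j, ⟪f j, u j⟫_ℂ = 0 := by
    have : ∑ j, ⟪f j, u j⟫_ℂ = (starRingEnd ℂ) (∑ j, ⟪u j, f j⟫_ℂ) := by
      rw [map_sum]
      exact Finset.sum_congr rfl fun j _ => (inner_conj_symm _ _).symm
    rw [this, tr_u, map_zero]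
  -- the potential as a complex diagonal sum
  have pot : ∀ w : Fin k → Esp n,
      ∑ j, ⟪w j, S (w j)⟫_ℂ = ((crossPot f w : ℝ) : ℂ) := by
    intro w
    have t1 : ∀ j, ⟪w j, S (w j)⟫_ℂ = ∑ i, ((‖⟪f i, w j⟫_ℂ‖ ^ 2 : ℝ) : ℂ) := by
      intro j
      rw [hS, inner_frameOp]
      refine Finset.sum_congr rfl fun i _ => ?_
      rw [← inner_conj_symm (w j) (f i), RCLike.conj_mul]
      norm_cast
    rw [Finset.sum_congr rfl fun j _ => t1 j, Finset.sum_comm, crossPot]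
    push_cast
    rfl
  -- expansion of the potential
  have expand : ∀ j, ⟪h j, S (h j)⟫_ℂ
      = ⟪g j, f j⟫_ℂ + ⟪f j, u j⟫_ℂ + ⟪u j, f j⟫_ℂ + ⟪u j, S (u j)⟫_ℂ := by
    intro j
    have sa : ⟪g j, S (u j)⟫_ℂ = ⟪f j, u j⟫_ℂ := by
      rw [hS, ← frameOp_selfAdj, ← hS, hg]
    rw [hgu j, map_add, inner_add_left, inner_add_right, inner_add_right, hg j, sa]
    ring
  have keyC : ((crossPot f h : ℝ) : ℂ) = (n : ℂ) + ((crossPot f u : ℝ) : ℂ) := by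
    rw [← pot h, ← pot u, Finset.sum_congr rfl fun j _ => expand j]
    simp only [Finset.sum_add_distrib, tr_g, tr_u, tr_u']
    ring
  have key : crossPot f h = n + crossPot f u := by
    have := keyC
    push_cast at this
    exact_mod_cast this
  have unn : 0 ≤ crossPot f u := by
    refine Finset.sum_nonneg fun i _ => Finset.sum_nonneg fun j _ => sq_nonneg _
  constructor
  · linarith
  constructor
  · intro hP
    have hu0 : crossPot f u = 0 := by linarith
    have hz : ∀ j, u j = 0 := by
      intro j
      refine eq_zero_of_inner_frame hf (u j) fun i => ?_
      have h1 := (Finset.sum_eq_zero_iff_of_nonneg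
        (fun i _ => Finset.sum_nonneg fun j _ => sq_nonneg ‖⟪f i, u j⟫_ℂ‖)).mp hu0
        i (Finset.mem_univ i)
      have h2 := (Finset.sum_eq_zero_iff_of_nonneg
        (fun j _ => sq_nonneg ‖⟪f i, u j⟫_ℂ‖)).mp h1 j (Finset.mem_univ j)
      rwa [pow_eq_zero_iff (by norm_num), norm_eq_zero] at h2
    intro i
    have : h i = g i := by rw [hgu i, hz i, add_zero]
    rw [this]
    exact hg i
  · intro hC
    have heq : ∀ j, h j = g j := by
      intro j
      exact hinj ((hC j).trans (hg j).symm)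
    have hu0 : crossPot f u = 0 := by
      have : ∀ j, u j = 0 := fun j => by rw [hu]; simp [heq j]
      simp [crossPot, this]
    linarith
end
end

section
/- Let F be a frame for F^n with canonical dual G = {g_i}_{i=1}^k and g_1 ≠ 0. Then H = {-g_1, g_2, ..., g_k} satisfies P_F(H) = n but H is not a dual frame of F. -/
open scoped InnerProductSpace ComplexInnerProductSpace
open Finset

noncomputable section

/-- If all inner products with a spanning family vanish, the vector is zero. -/
lemma eq_zero_of_inner_eq_zero {n k : ℕ} (f : Fin k → Esp n) (hf : IsFrame f)
    (x : Esp n) (hx : ∀ j, ⟪f j, x⟫_ℂ = 0) : x = 0 := by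
  have hx' : x ∈ (⊤ : Submodule ℂ (Esp n))ᗮ := by
    rw [← hf]
    intro u hu
    induction hu using Submodule.span_induction with
    | mem u hu => obtain ⟨j, rfl⟩ := hu; exact hx j
    | zero => simp
    | add u v _ _ h1 h2 => simp [inner_add_left, h1, h2]
    | smul c u _ h1 => simp [inner_smul_left, h1]
  simpa [Submodule.top_orthogonal_eq_bot] using hx'

/-- If the frame operator kills `x`, then `x = 0`. -/
lemma frameOp_inj {n k : ℕ} (f : Fin k → Esp n) (hf : IsFrame f)
    (x : Esp n) (hx : ∑ j, (⟪f j, x⟫_ℂ) • f j = 0) : x = 0 := by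
  have h1 : (∑ j, (Complex.normSq (⟪f j, x⟫_ℂ) : ℂ)) = 0 := by
    have := congrArg (fun y => ⟪x, y⟫_ℂ) hx
    simp only [inner_sum, inner_smul_right, inner_zero_right] at this
    rw [← this]
    refine Finset.sum_congr rfl fun j _ => ?_
    rw [← inner_conj_symm x (f j), Complex.mul_conj]
  have h2 : (∑ j, Complex.normSq (⟪f j, x⟫_ℂ)) = 0 := by exact_mod_cast h1
  have hz : ∀ j, ⟪f j, x⟫_ℂ = 0 := by
    intro j
    have := (Finset.sum_eq_zero_iff_of_nonneg
      (fun j _ => Complex.normSq_nonneg _)).mp h2 j (mem_univ j)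
    exact Complex.normSq_eq_zero.mp this
  exact eq_zero_of_inner_eq_zero f hf x hz

/-- The frame operator as a linear map. -/
def frameOp {n k : ℕ} (f : Fin k → Esp n) : Esp n →ₗ[ℂ] Esp n where
  toFun x := ∑ j, (⟪f j, x⟫_ℂ) • f j
  map_add' x y := by simp [inner_add_right, add_smul, Finset.sum_add_distrib]
  map_smul' c x := by simp [inner_smul_right, smul_smul, Finset.smul_sum]

/-- The canonical dual is a dual frame (reconstruction property). -/
lemma canonicalDual_reconstruction {n k : ℕ} (f g : Fin k → Esp n)
    (hf : IsFrame f) (hg : IsCanonicalDual f g) :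
    ∀ x : Esp n, ∑ i, (⟪g i, x⟫_ℂ) • f i = x := by
  have hinj : Function.Injective (frameOp f) := by
    rw [injective_iff_map_eq_zero]
    intro x hx
    exact frameOp_inj f hf x hx
  have hsurj : Function.Surjective (frameOp f) :=
    (LinearMap.injective_iff_surjective_of_finrank_eq_finrank rfl).mp hinj
  intro x
  obtain ⟨y, rfl⟩ := hsurj x
  have hsa : ∀ i, ⟪g i, frameOp f y⟫_ℂ = ⟪f i, y⟫_ℂ := by
    intro i
    have h1 : ⟪g i, frameOp f y⟫_ℂ = ⟪frameOp f (g i), y⟫_ℂ := by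
      simp only [frameOp, LinearMap.coe_mk, AddHom.coe_mk, inner_sum, sum_inner,
        inner_smul_right, inner_smul_left]
      refine Finset.sum_congr rfl fun j _ => ?_
      rw [← inner_conj_symm (g i) (f j)]
      ring
    rw [h1]
    have h2 : frameOp f (g i) = f i := hg i
    rw [h2]
  calc ∑ i, (⟪g i, frameOp f y⟫_ℂ) • f i = ∑ i, (⟪f i, y⟫_ℂ) • f i :=
        Finset.sum_congr rfl fun i _ => by rw [hsa i]
    _ = frameOp f y := rfl

/-- negating one nonzero vector of the canonical dual yields a family
with cross potential `= n` which is nevertheless not a dual frame. -/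
theorem negated_canonicalDual_not_dual {n k : ℕ} [NeZero k] (f g : Fin k → Esp n)
    (hf : IsFrame f) (hg : IsCanonicalDual f g) (hne : g 0 ≠ 0) :
    crossPot f (Function.update g 0 (-(g 0))) = n ∧
    ¬ IsDualFrame f (Function.update g 0 (-(g 0))) := by
  have hrec := canonicalDual_reconstruction f g hf hg
  constructor
  · -- cross potential computation
    have h1 : crossPot f (Function.update g 0 (-(g 0))) = crossPot f g := by
      unfold crossPot
      refine Finset.sum_congr rfl fun i _ => Finset.sum_congr rfl fun j _ => ?_
      by_cases hj : j = 0
      · subst hj; simp [Function.update_self, inner_neg_right]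
      · simp [Function.update_of_ne hj]
    rw [h1]
    have h2 : crossPot f g = (∑ j, ⟪g j, f j⟫_ℂ).re := by
      unfold crossPot
      rw [Finset.sum_comm, Complex.re_sum]
      refine Finset.sum_congr rfl fun j _ => ?_
      have h3 : ⟪g j, f j⟫_ℂ = ⟪g j, ∑ i, (⟪f i, g j⟫_ℂ) • f i⟫_ℂ := by rw [hg j]
      rw [h3, inner_sum, Complex.re_sum]
      refine Finset.sum_congr rfl fun i _ => ?_
      rw [inner_smul_right, ← inner_conj_symm (g j) (f i), Complex.mul_conj]
      simp [Complex.sq_norm]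
    rw [h2]
    have key : ∀ m : Fin n, ∑ j, (starRingEnd ℂ) (g j m) * f j m = 1 := by
      intro m
      have h4 := hrec (EuclideanSpace.single m (1 : ℂ))
      have h5 := congrArg (fun v : Esp n => ⟪EuclideanSpace.single m (1 : ℂ), v⟫_ℂ) h4
      simp only [inner_sum, inner_smul_right, EuclideanSpace.inner_single_left,
        EuclideanSpace.inner_single_right, EuclideanSpace.single_apply, if_true,
        map_one, one_mul, mul_one] at h5
      rw [← h5]
    have h6 : (∑ j, ⟪g j, f j⟫_ℂ) = (n : ℂ) := by
      have : ∀ j : Fin k, ⟪g j, f j⟫_ℂ = ∑ m, (starRingEnd ℂ) (g j m) * f j m := by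
        intro j
        simp [PiLp.inner_apply, RCLike.inner_apply, mul_comm]
      rw [Finset.sum_congr rfl fun j _ => this j, Finset.sum_comm,
        Finset.sum_congr rfl fun m _ => key m]
      simp
    rw [h6]
    simp
  · -- not a dual frame
    rintro ⟨-, hdual⟩
    have e1 := hdual (g 0)
    have e2 := hrec (g 0)
    have ediff : ∑ i, ((⟪Function.update g 0 (-(g 0)) i, g 0⟫_ℂ)
        - ⟪g i, g 0⟫_ℂ) • f i = 0 := by
      simp only [sub_smul, Finset.sum_sub_distrib, e1, e2, sub_self]
    rw [Finset.sum_eq_single_of_mem 0 (mem_univ 0)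
      (fun i _ hi => by simp [Function.update_of_ne hi])] at ediff
    simp only [Function.update_self, inner_neg_left] at ediff
    have hinner : ⟪g 0, g 0⟫_ℂ ≠ 0 := inner_self_ne_zero.mpr hne
    have hf0 : f 0 = 0 := by
      have hc : (-⟪g 0, g 0⟫_ℂ - ⟪g 0, g 0⟫_ℂ) ≠ 0 := by
        intro h
        apply hinner
        have : (2 : ℂ) * ⟪g 0, g 0⟫_ℂ = 0 := by linear_combination -h
        simpa using (mul_eq_zero.mp this).resolve_left (by norm_num)
      exact (smul_eq_zero.mp ediff).resolve_left hc
    have : g 0 = 0 := by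
      apply frameOp_inj f hf
      rw [hg 0, hf0]
    exact hne this
end
end

section
/- Let F be a frame for F^n and G a dual frame with ⟨f_i, g_i⟩ = n/k for all i. Then the maximal off-diagonal magnitude μ(Gr(F,G)) = max_{i≠j} |⟨f_i, g_j⟩| satisfies μ(Gr(F,G)) ≥ √[(nk - n²)/(k²(k-1))]. -/
open scoped InnerProductSpace ComplexInnerProductSpace
open Finset

noncomputable section

/-- The maximal off-diagonal magnitude `μ(Gr(F,G)) = max_{i ≠ j} |⟨f i, g j⟩|`. -/
def muOffDiag {n k : ℕ} (f g : Fin k → Esp n) : ℝ :=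
  ⨆ p : {p : Fin k × Fin k // p.1 ≠ p.2}, ‖(⟪g (p : Fin k × Fin k).2, f (p : Fin k × Fin k).1⟫_ℂ)‖

/-- generalized Welch bound for a frame and a dual frame with
`⟨f i, g i⟩ = n/k` on the diagonal. -/
theorem mu_lower_bound_const_diag {n k : ℕ} (f g : Fin k → Esp n)
    (hf : IsFrame f) (hg : IsDualFrame f g)
    (hdiag : ∀ i, (⟪g i, f i⟫_ℂ) = (n : ℂ) / k) :
    Real.sqrt (((n : ℝ) * k - (n : ℝ) ^ 2) / ((k : ℝ) ^ 2 * ((k : ℝ) - 1))) ≤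
      muOffDiag f g := by
  set μ := muOffDiag f g with hμdef
  have hμ0 : 0 ≤ μ := Real.iSup_nonneg fun p => norm_nonneg _
  rcases Nat.lt_or_ge k 2 with hk | hk
  · -- degenerate cases k = 0, 1 : the denominator vanishes
    have hden : ((k : ℝ) ^ 2 * ((k : ℝ) - 1)) = 0 := by
      have h01 : k = 0 ∨ k = 1 := by omega
      rcases h01 with h | h <;> norm_num [h]
    rw [hden, div_zero, Real.sqrt_zero]
    exact hμ0
  -- main case k ≥ 2
  have hk0 : (k : ℝ) ≥ 2 := by exact_mod_cast hk
  have hkC : (k : ℂ) ≠ 0 := by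
    have : (k : ℕ) ≠ 0 := by omega
    exact_mod_cast this
  have hkR : (k : ℝ) > 0 := by linarith
  -- entries of the Gram matrix
  set M : Fin k → Fin k → ℂ := fun i j => ⟪g j, f i⟫_ℂ with hM
  have hbdd : BddAbove (Set.range fun p : {p : Fin k × Fin k // p.1 ≠ p.2} =>
      ‖(⟪g (p : Fin k × Fin k).2, f (p : Fin k × Fin k).1⟫_ℂ)‖) :=
    (Set.finite_range _).bddAbove
  have hle : ∀ i j, i ≠ j → ‖M i j‖ ≤ μ := fun i j h =>
    le_ciSup hbdd (⟨(i, j), h⟩ : {p : Fin k × Fin k // p.1 ≠ p.2})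
  -- M is idempotent
  have hMM : ∀ i l, ∑ j, M i j * M j l = M i l := by
    intro i l
    have h1 := hg.2 (f i)
    have h2 : ⟪g l, ∑ j, (⟪g j, f i⟫_ℂ) • f j⟫_ℂ = ⟪g l, f i⟫_ℂ := by rw [h1]
    rw [inner_sum] at h2
    simpa [hM, inner_smul_right, mul_comm] using h2
  -- trace of M² equals n
  have htr : ∑ i, ∑ j, M i j * M j i = (n : ℂ) := by
    have : ∀ i, ∑ j, M i j * M j i = (n : ℂ) / k := by
      intro i
      rw [hMM i i]
      simpa [hM] using hdiag i
    rw [Finset.sum_congr rfl fun i _ => this i, Finset.sum_const, Finset.card_univ,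
      Fintype.card_fin, nsmul_eq_mul, mul_div_cancel₀ _ hkC]
  set S : ℝ := ∑ i, ∑ j, ‖M i j‖ ^ 2 with hS
  -- Frobenius bound : n ≤ S
  have hnS : (n : ℝ) ≤ S := by
    have h1 : (n : ℝ) = ‖∑ i, ∑ j, M i j * M j i‖ := by
      rw [htr, Complex.norm_natCast]
    have h2 : ‖∑ i, ∑ j : Fin k, M i j * M j i‖ ≤
        ∑ i, ∑ j : Fin k, ‖M i j‖ * ‖M j i‖ := by
      refine le_trans (norm_sum_le _ _) (Finset.sum_le_sum fun i _ => ?_)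
      refine le_trans (norm_sum_le _ _) (Finset.sum_le_sum fun j _ => ?_)
      rw [norm_mul]
    have h3 : ∑ i, ∑ j : Fin k, ‖M i j‖ * ‖M j i‖ ≤
        ∑ i, ∑ j : Fin k, (‖M i j‖ ^ 2 + ‖M j i‖ ^ 2) / 2 := by
      refine Finset.sum_le_sum fun i _ => Finset.sum_le_sum fun j _ => ?_
      nlinarith [sq_nonneg (‖M i j‖ - ‖M j i‖)]
    have h4 : ∑ i, ∑ j : Fin k, (‖M i j‖ ^ 2 + ‖M j i‖ ^ 2) / 2 = S := by
      have hswap : ∑ i, ∑ j : Fin k, ‖M j i‖ ^ 2 = S := Finset.sum_comm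
      have e1 : ∑ i, ∑ j : Fin k, (‖M i j‖ ^ 2 + ‖M j i‖ ^ 2) / 2
          = (∑ i, ∑ j : Fin k, ‖M i j‖ ^ 2) / 2 + (∑ i, ∑ j : Fin k, ‖M j i‖ ^ 2) / 2 := by
        simp only [Finset.sum_div, ← Finset.sum_add_distrib]
        exact Finset.sum_congr rfl fun i _ => Finset.sum_congr rfl fun j _ => by ring
      rw [e1, hswap, show (∑ i, ∑ j : Fin k, ‖M i j‖ ^ 2) = S from hS.symm]
      ring
    linarith [h1 ▸ h2, h3, h4.le, h4.ge]
  -- diagonal entries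
  have hdiagnorm : ∀ i, ‖M i i‖ ^ 2 = ((n : ℝ) / k) ^ 2 := by
    intro i
    have : M i i = (n : ℂ) / k := hdiag i
    rw [this, norm_div, Complex.norm_natCast, Complex.norm_natCast]
  -- off-diagonal bound : S ≤ n²/k² · k + k(k-1)μ²
  have hSle : S ≤ (k : ℝ) * ((n : ℝ) / k) ^ 2 + (k : ℝ) * ((k : ℝ) - 1) * μ ^ 2 := by
    have hrow : ∀ i : Fin k, ∑ j, ‖M i j‖ ^ 2 ≤
        ((n : ℝ) / k) ^ 2 + ((k : ℝ) - 1) * μ ^ 2 := by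
      intro i
      rw [← Finset.add_sum_erase _ _ (Finset.mem_univ i), hdiagnorm i]
      gcongr ((n : ℝ) / k) ^ 2 + ?_
      have hb : ∀ j ∈ Finset.univ.erase i, ‖M i j‖ ^ 2 ≤ μ ^ 2 := by
        intro j hj
        have hij : i ≠ j := (Finset.ne_of_mem_erase hj).symm
        have := hle i j hij
        nlinarith [norm_nonneg (M i j)]
      calc ∑ j ∈ Finset.univ.erase i, ‖M i j‖ ^ 2
          ≤ ∑ _j ∈ Finset.univ.erase i, μ ^ 2 := Finset.sum_le_sum hb
        _ = ((k : ℝ) - 1) * μ ^ 2 := by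
            rw [Finset.sum_const, Finset.card_erase_of_mem (Finset.mem_univ i),
              Finset.card_univ, Fintype.card_fin, nsmul_eq_mul]
            have : ((k - 1 : ℕ) : ℝ) = (k : ℝ) - 1 := by
              have : 1 ≤ k := by omega
              push_cast [this]
              ring
            rw [this]
    calc S ≤ ∑ _i : Fin k, (((n : ℝ) / k) ^ 2 + ((k : ℝ) - 1) * μ ^ 2) :=
          Finset.sum_le_sum fun i _ => hrow i
      _ = (k : ℝ) * ((n : ℝ) / k) ^ 2 + (k : ℝ) * ((k : ℝ) - 1) * μ ^ 2 := by
          rw [Finset.sum_const, Finset.card_univ, Fintype.card_fin, nsmul_eq_mul]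
          ring
  -- combine
  have key : (n : ℝ) ≤ (k : ℝ) * ((n : ℝ) / k) ^ 2 + (k : ℝ) * ((k : ℝ) - 1) * μ ^ 2 :=
    le_trans hnS hSle
  have hrad : ((n : ℝ) * k - (n : ℝ) ^ 2) / ((k : ℝ) ^ 2 * ((k : ℝ) - 1)) ≤ μ ^ 2 := by
    rw [div_le_iff₀ (by nlinarith : (0:ℝ) < (k : ℝ) ^ 2 * ((k : ℝ) - 1))]
    have hq : (k : ℝ) * ((n : ℝ) / k) ^ 2 = (n : ℝ) ^ 2 / k := by
      field_simp
    rw [hq] at key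
    have hkey2 : (n : ℝ) * k ≤ (n : ℝ) ^ 2 + (k : ℝ) * ((k : ℝ) - 1) * μ ^ 2 * k := by
      have := mul_le_mul_of_nonneg_right key (le_of_lt hkR)
      rw [add_mul, div_mul_cancel₀ _ (ne_of_gt hkR)] at this
      linarith
    nlinarith
  calc Real.sqrt (((n : ℝ) * k - (n : ℝ) ^ 2) / ((k : ℝ) ^ 2 * ((k : ℝ) - 1)))
      ≤ Real.sqrt (μ ^ 2) := Real.sqrt_le_sqrt hrad
    _ = μ := by rw [Real.sqrt_sq hμ0]
end
end

section
/- Let F be a frame for F^n with k ≥ n vectors and G a dual frame such that n²/k + Σ_{i,j: i≠j} |⟨f_i, g_j⟩|² ≥ n. Then μ(Gr(F,G))² ≥ (n - n²/k)/(k(k-1)). -/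
open scoped InnerProductSpace ComplexInnerProductSpace
open Finset

noncomputable section

lemma Finset.sum_sum_sdiff_singleton_le {ι : Type*} [Fintype ι] [DecidableEq ι]
    (a : ι → ι → ℝ) {M : ℝ} (h : ∀ i j, i ≠ j → a i j ≤ M) :
    ∑ i, ∑ j ∈ univ \ {i}, a i j ≤ Fintype.card ι * (Fintype.card ι - 1) * M := by
  calc ∑ i, ∑ j ∈ univ \ {i}, a i j
      ≤ ∑ i : ι, ∑ _j ∈ univ \ {i}, M :=
        sum_le_sum fun i _ ↦ sum_le_sum fun j hj ↦ h i j (by simpa [eq_comm] using hj)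
    _ = Fintype.card ι * (Fintype.card ι - 1) * M := by
        rcases isEmpty_or_nonempty ι with _ | _
        · simp
        · simp only [sum_const, card_univ_sdiff, card_singleton, card_univ, nsmul_eq_mul,
            Nat.cast_sub Fintype.card_pos]
          ring

lemma norm_inner_le_muOffDiag {n k : ℕ} (f g : Fin k → Esp n) {i j : Fin k} (hij : i ≠ j) :
    ‖(⟪g j, f i⟫_ℂ)‖ ≤ muOffDiag f g :=
  le_ciSup (f := fun p : {p : Fin k × Fin k // p.1 ≠ p.2} ↦ ‖(⟪g p.1.2, f p.1.1⟫_ℂ)‖)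
    (Set.finite_range _).bddAbove ⟨(i, j), hij⟩

lemma sum_offDiag_norm_inner_sq_le {n k : ℕ} (f g : Fin k → Esp n) :
    ∑ i, ∑ j ∈ univ \ {i}, ‖(⟪g j, f i⟫_ℂ)‖ ^ 2 ≤ k * (k - 1) * muOffDiag f g ^ 2 := by
  simpa using Finset.sum_sum_sdiff_singleton_le (fun i j ↦ ‖(⟪g j, f i⟫_ℂ)‖ ^ 2)
    fun i j hij ↦ pow_le_pow_left₀ (norm_nonneg _) (norm_inner_le_muOffDiag f g hij) 2

theorem mu_sq_lower_bound_general {n k : ℕ} (f g : Fin k → Esp n)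
    (hb : (n : ℝ) ≤ (n : ℝ) ^ 2 / k +
      ∑ i, ∑ j ∈ Finset.univ \ {i}, ‖(⟪g j, f i⟫_ℂ)‖ ^ 2) :
    ((n : ℝ) - (n : ℝ) ^ 2 / k) / ((k : ℝ) * ((k : ℝ) - 1)) ≤ muOffDiag f g ^ 2 := by
  rcases le_or_gt k 1 with hk1 | hk1
  -- for `k ≤ 1` the denominator vanishes and the left side is the junk value `x / 0 = 0`
  · have hzero : (k : ℝ) * ((k : ℝ) - 1) = 0 := by interval_cases k <;> norm_num
    rw [hzero, div_zero]
    positivity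
  · have hpos : (0 : ℝ) < (k : ℝ) * ((k : ℝ) - 1) := by
      have : (1 : ℝ) < k := by exact_mod_cast hk1
      nlinarith
    rw [div_le_iff₀ hpos]
    linarith [sum_offDiag_norm_inner_sq_le f g]

/-- partial proof of the conjectured Welch-type bound, under the
assumption (b): `n²/k + ∑_{i ≠ j} |⟨f i, g j⟩|² ≥ n`. -/
theorem mu_sq_lower_bound {n k : ℕ} (f g : Fin k → Esp n)
    (hf : IsFrame f) (hk : n ≤ k) (hg : IsDualFrame f g)
    (hb : (n : ℝ) ≤ (n : ℝ) ^ 2 / k +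
      ∑ i, ∑ j ∈ Finset.univ \ {i}, ‖(⟪g j, f i⟫_ℂ)‖ ^ 2) :
    ((n : ℝ) - (n : ℝ) ^ 2 / k) / ((k : ℝ) * ((k : ℝ) - 1)) ≤ muOffDiag f g ^ 2 :=
  mu_sq_lower_bound_general f g hb
end
end

section
/- Let F be a frame for F^n and H a dual frame, and define the sum potential Φ^η_sum(G) = Σ_{i≠j} e^{η|G_{ij}|²} + Σ_i e^{-η(n²/k² - C²_{k,n})} e^{η|G_{ii}|²} where G_{ij} = ⟨f_i, h_j⟩ and C_{k,n} = √[(nk-n²)/(k²(k-1))]. Then Φ^η_sum(G) ≥ k² exp(η(n/k² - n²/k³ + n(k-n)/(k³(k-1)))). -/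
open scoped InnerProductSpace ComplexInnerProductSpace
open Finset

noncomputable section

/-- `C_{k,n} = √((nk - n²)/(k²(k-1)))`. -/
def Ckn (k n : ℕ) : ℝ :=
  Real.sqrt (((n : ℝ) * k - (n : ℝ) ^ 2) / ((k : ℝ) ^ 2 * ((k : ℝ) - 1)))

/-- The sum potential `Φ^η_sum(G)` of the cross-Gramian `G i j = ⟨f i, h j⟩`. -/
def sumExpPot {n k : ℕ} (f h : Fin k → Esp n) (η : ℝ) : ℝ :=
  (∑ i, ∑ j ∈ Finset.univ \ {i}, Real.exp (η * ‖(⟪h j, f i⟫_ℂ)‖ ^ 2)) +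
    ∑ i, Real.exp (-η * ((n : ℝ) ^ 2 / (k : ℝ) ^ 2 - Ckn k n ^ 2)) *
      Real.exp (η * ‖(⟪h i, f i⟫_ℂ)‖ ^ 2)

/-- trace of the cross Gramian is `n` -/
lemma trace_eq {n k : ℕ} (f h : Fin k → Esp n)
    (hd : ∀ x : Esp n, ∑ i, (⟪h i, x⟫_ℂ) • f i = x) :
    ∑ i, ⟪h i, f i⟫_ℂ = (n : ℂ) := by
  calc ∑ i, ⟪h i, f i⟫_ℂ
      = ∑ i, ∑ m, (starRingEnd ℂ) (h i m) * f i m := by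
        refine Finset.sum_congr rfl fun i _ => ?_
        simp [PiLp.inner_apply, RCLike.inner_apply]
        exact Finset.sum_congr rfl fun _ _ => mul_comm _ _
    _ = ∑ m : Fin n, ∑ i, (starRingEnd ℂ) (h i m) * f i m := Finset.sum_comm
    _ = ∑ m : Fin n, (1:ℂ) := by
        refine Finset.sum_congr rfl fun m _ => ?_
        have h2 : (∑ x, (⟪h x, EuclideanSpace.single m 1⟫_ℂ) • f x) m
            = (EuclideanSpace.single m (1:ℂ)) m := congrArg (fun v : Esp n => v m) (hd _)
        have h3 : (∑ x, (⟪h x, EuclideanSpace.single m 1⟫_ℂ) • f x) m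
            = ∑ x, (⟪h x, EuclideanSpace.single m 1⟫_ℂ) * f x m :=
          by rw [WithLp.ofLp_sum, Finset.sum_apply]; rfl
        rw [h3] at h2
        simpa [PiLp.inner_apply, RCLike.inner_apply, EuclideanSpace.single_apply,
          mul_comm] using h2
    _ = (n : ℂ) := by simp

/-- cross potential lower bound: `n ≤ ∑_{i,j} |⟪h j, f i⟫|²` -/
lemma crossPot_ge {n k : ℕ} (f h : Fin k → Esp n)
    (hd : ∀ x : Esp n, ∑ i, (⟪h i, x⟫_ℂ) • f i = x) :
    (n : ℝ) ≤ ∑ i, ∑ j, ‖(⟪h j, f i⟫_ℂ)‖ ^ 2 := by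
  have hid : ∀ i l : Fin k, ∑ j, ⟪h j, f i⟫_ℂ * ⟪h l, f j⟫_ℂ = ⟪h l, f i⟫_ℂ := by
    intro i l
    have h0 := congrArg (fun x => (⟪h l, x⟫_ℂ)) (hd (f i))
    simpa [inner_sum, inner_smul_right, mul_comm] using h0
  have htr : ∑ i, ∑ j, ⟪h j, f i⟫_ℂ * ⟪h i, f j⟫_ℂ = (n : ℂ) := by
    rw [← trace_eq f h hd]
    exact Finset.sum_congr rfl fun i _ => hid i i
  have e1 : (n : ℝ) = ∑ i, ∑ j, (⟪h j, f i⟫_ℂ * ⟪h i, f j⟫_ℂ).re := by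
    have := congrArg Complex.re htr
    simpa [Complex.re_sum] using this.symm
  rw [e1]
  have step1 : ∑ i, ∑ j, (⟪h j, f i⟫_ℂ * ⟪h i, f j⟫_ℂ).re
      ≤ ∑ i, ∑ j, (‖(⟪h j, f i⟫_ℂ)‖ ^ 2 + ‖(⟪h i, f j⟫_ℂ)‖ ^ 2) / 2 := by
    refine Finset.sum_le_sum fun i _ => Finset.sum_le_sum fun j _ => ?_
    have h1 : (⟪h j, f i⟫_ℂ * ⟪h i, f j⟫_ℂ).re ≤ ‖(⟪h j, f i⟫_ℂ * ⟪h i, f j⟫_ℂ)‖ :=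
      Complex.re_le_norm _
    have h2 : ‖(⟪h j, f i⟫_ℂ * ⟪h i, f j⟫_ℂ)‖ = ‖(⟪h j, f i⟫_ℂ)‖ * ‖(⟪h i, f j⟫_ℂ)‖ :=
      norm_mul _ _
    nlinarith [sq_nonneg (‖(⟪h j, f i⟫_ℂ)‖ - ‖(⟪h i, f j⟫_ℂ)‖)]
  have step2 : ∑ i, ∑ j, (‖(⟪h j, f i⟫_ℂ)‖ ^ 2 + ‖(⟪h i, f j⟫_ℂ)‖ ^ 2) / 2
      = ∑ i, ∑ j, ‖(⟪h j, f i⟫_ℂ)‖ ^ 2 := by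
    have hc : ∑ i, ∑ j, ‖(⟪h i, f j⟫_ℂ)‖ ^ 2 = ∑ i, ∑ j, ‖(⟪h j, f i⟫_ℂ)‖ ^ 2 :=
      Finset.sum_comm
    simp only [add_div, Finset.sum_add_distrib, ← Finset.sum_div]
    linarith
  linarith

lemma Ckn_sq {k n : ℕ} (hk : n ≤ k) :
    Ckn k n ^ 2 = ((n : ℝ) * k - (n : ℝ) ^ 2) / ((k : ℝ) ^ 2 * ((k : ℝ) - 1)) := by
  apply Real.sq_sqrt
  rcases Nat.lt_or_ge k 2 with h2 | h2
  · interval_cases k <;> interval_cases n <;> norm_num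
  · apply div_nonneg
    · have hn : (n : ℝ) ≤ (k : ℝ) := by exact_mod_cast hk
      nlinarith [Nat.cast_nonneg (α := ℝ) n]
    · have h2' : (2 : ℝ) ≤ (k : ℝ) := by exact_mod_cast h2
      nlinarith

/-- lower bound for the sum potential. -/
theorem sumExpPot_lower_bound {n k : ℕ} (f h : Fin k → Esp n)
    (hk : n ≤ k) (hf : IsFrame f) (hh : IsDualFrame f h) (η : ℝ) (hη : 0 < η) :
    (k : ℝ) ^ 2 * Real.exp (η * ((n : ℝ) / (k : ℝ) ^ 2 - (n : ℝ) ^ 2 / (k : ℝ) ^ 3 +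
        (n : ℝ) * ((k : ℝ) - n) / ((k : ℝ) ^ 3 * ((k : ℝ) - 1)))) ≤
      sumExpPot f h η := by
  set T : ℝ := (n : ℝ) / (k : ℝ) ^ 2 - (n : ℝ) ^ 2 / (k : ℝ) ^ 3 +
      (n : ℝ) * ((k : ℝ) - n) / ((k : ℝ) ^ 3 * ((k : ℝ) - 1)) with hT
  set c : ℝ := (n : ℝ) ^ 2 / (k : ℝ) ^ 2 - Ckn k n ^ 2 with hc
  -- key algebraic identity
  have hkey : (k : ℝ) ^ 2 * T = (n : ℝ) - (k : ℝ) * c := by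
    rw [hT, hc, Ckn_sq hk]
    rcases Nat.lt_or_ge k 2 with h2 | h2
    · interval_cases k <;> interval_cases n <;> norm_num
    · have h2' : (2 : ℝ) ≤ (k : ℝ) := by exact_mod_cast h2
      have hk0 : (k : ℝ) ≠ 0 := by positivity
      have hk1 : (k : ℝ) - 1 ≠ 0 := by intro hcon; nlinarith
      field_simp
      ring
  -- the modified Gramian entries
  set u : Fin k → Fin k → ℝ := fun i j =>
    if i = j then ‖(⟪h i, f i⟫_ℂ)‖ ^ 2 - c else ‖(⟪h j, f i⟫_ℂ)‖ ^ 2 with hu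
  -- sumExpPot as a full double sum
  have hpot : sumExpPot f h η = ∑ i, ∑ j, Real.exp (η * u i j) := by
    unfold sumExpPot
    rw [← Finset.sum_add_distrib]
    refine Finset.sum_congr rfl fun i _ => ?_
    have hsplit : ∑ j, Real.exp (η * u i j)
        = ∑ j ∈ Finset.univ \ {i}, Real.exp (η * u i j) + Real.exp (η * u i i) := by
      rw [Finset.sum_eq_sum_sdiff_singleton_add (Finset.mem_univ i)]
    rw [hsplit]
    congr 1
    · refine Finset.sum_congr rfl fun j hj => ?_
      have hji : i ≠ j := by
        intro e; simp [e] at hj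
      simp [hu, hji]
    · simp only [hu, if_pos rfl]
      rw [← Real.exp_add]
      congr 1; rw [hc]; ring
  -- total sum of u
  have hCP : (n : ℝ) ≤ ∑ i, ∑ j, ‖(⟪h j, f i⟫_ℂ)‖ ^ 2 := crossPot_ge f h hh.2
  have husum : ∑ i, ∑ j, u i j = (∑ i, ∑ j, ‖(⟪h j, f i⟫_ℂ)‖ ^ 2) - (k : ℝ) * c := by
    have hrow : ∀ i : Fin k, ∑ j, u i j = (∑ j, ‖(⟪h j, f i⟫_ℂ)‖ ^ 2) - c := by
      intro i
      rw [Finset.sum_eq_sum_sdiff_singleton_add (Finset.mem_univ i) (u i),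
        Finset.sum_eq_sum_sdiff_singleton_add (Finset.mem_univ i)
          (fun j => ‖(⟪h j, f i⟫_ℂ)‖ ^ 2)]
      have : ∑ j ∈ Finset.univ \ {i}, u i j
          = ∑ j ∈ Finset.univ \ {i}, ‖(⟪h j, f i⟫_ℂ)‖ ^ 2 := by
        refine Finset.sum_congr rfl fun j hj => ?_
        have hji : i ≠ j := by intro e; simp [e] at hj
        simp [hu, hji]
      rw [this]
      simp [hu]
    calc ∑ i, ∑ j, u i j = ∑ i : Fin k, ((∑ j, ‖(⟪h j, f i⟫_ℂ)‖ ^ 2) - c) :=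
          Finset.sum_congr rfl fun i _ => hrow i
      _ = (∑ i, ∑ j, ‖(⟪h j, f i⟫_ℂ)‖ ^ 2) - (k : ℝ) * c := by
          rw [Finset.sum_sub_distrib]
          simp [Finset.card_univ, mul_comm]
  -- pointwise exponential bound
  have hexp : ∀ i j : Fin k,
      Real.exp (η * T) * (1 + (η * u i j - η * T)) ≤ Real.exp (η * u i j) := by
    intro i j
    have h1 := Real.add_one_le_exp (η * u i j - η * T)
    calc Real.exp (η * T) * (1 + (η * u i j - η * T))
        ≤ Real.exp (η * T) * Real.exp (η * u i j - η * T) := by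
          apply mul_le_mul_of_nonneg_left (by linarith) (Real.exp_nonneg _)
      _ = Real.exp (η * u i j) := by rw [← Real.exp_add]; ring_nf
  have hlow : ∑ i, ∑ j, Real.exp (η * T) * (1 + (η * u i j - η * T))
      ≤ ∑ i, ∑ j, Real.exp (η * u i j) :=
    Finset.sum_le_sum fun i _ => Finset.sum_le_sum fun j _ => hexp i j
  have hsum : ∑ i, ∑ j, Real.exp (η * T) * (1 + (η * u i j - η * T))
      = Real.exp (η * T) * ((k : ℝ) ^ 2 * (1 - η * T) + η * ∑ i, ∑ j, u i j) := by
    have expand : ∑ i, ∑ j, (1 + (η * u i j - η * T))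
        = (k : ℝ) ^ 2 * (1 - η * T) + η * ∑ i, ∑ j, u i j := by
      simp only [Finset.sum_add_distrib, Finset.sum_sub_distrib, Finset.sum_const,
        Finset.card_univ, Fintype.card_fin, nsmul_eq_mul, ← Finset.mul_sum]
      ring
    rw [← expand]
    simp only [← Finset.mul_sum]
  have hfin : (k : ℝ) ^ 2 ≤ (k : ℝ) ^ 2 * (1 - η * T) + η * ∑ i, ∑ j, u i j := by
    have h1 : (k : ℝ) ^ 2 * T ≤ ∑ i, ∑ j, u i j := by
      rw [husum, hkey]; linarith
    nlinarith
  calc (k : ℝ) ^ 2 * Real.exp (η * T)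
      ≤ Real.exp (η * T) * ((k : ℝ) ^ 2 * (1 - η * T) + η * ∑ i, ∑ j, u i j) := by
        rw [mul_comm ((k : ℝ) ^ 2)]
        exact mul_le_mul_of_nonneg_left hfin (Real.exp_nonneg _)
    _ = ∑ i, ∑ j, Real.exp (η * T) * (1 + (η * u i j - η * T)) := hsum.symm
    _ ≤ ∑ i, ∑ j, Real.exp (η * u i j) := hlow
    _ = sumExpPot f h η := hpot.symm
end
end
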